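/- arXiv:quant-ph/0602001 — 2 statements merged into one kernel-verified Lean document; each statement's English description precedes it below -/
import Mathlib

section
/- Let d be odd and ψ ∈ ℂ^{(ZMod d)^n} a state vector whose Wigner function is everywhere nonnegative. Then |ψ(q)|² ≥ |ψ(q-x)|·|ψ(q+x)| for all q, x ∈ (ZMod d)^n. -/
open scoped BigOperators
open Finset Matrix
open scoped ComplexOrder

attribute [instance] Classical.propDecidable

/-- The character `χ(t) = exp(2πit/d)` on `ZMod d`. -/
noncomputable def chi (d : ℕ) (t : ZMod d) : ℂ :=
  Complex.exp (2 * Real.pi * Complex.I * (t.val : ℂ) / (d : ℂ))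

/-- The standard symplectic form on `(Fin n → R) × (Fin n → R)`. -/
def symp (R : Type) [CommRing R] (n : ℕ) (v w : (Fin n → R) × (Fin n → R)) : R :=
  (∑ i, v.1 i * w.2 i) - ∑ i, v.2 i * w.1 i

/-- Single-particle Weyl operator `w(p,q) = χ(-2⁻¹pq) ẑ(p) x̂(q)` on `ℂ^d`. -/
noncomputable def weyl1 (d : ℕ) (p q : ZMod d) : Matrix (ZMod d) (ZMod d) ℂ :=
  Matrix.of fun x y => chi d (-(2⁻¹ : ZMod d) * p * q + p * x) * (if y = x - q then 1 else 0)

/-- Multi-particle Weyl operator on `(ℂ^d)^{⊗n}` in coordinates. -/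
noncomputable def weyl (d n : ℕ) (p q : Fin n → ZMod d) :
    Matrix (Fin n → ZMod d) (Fin n → ZMod d) ℂ :=
  Matrix.of fun x y =>
    chi d (-(2⁻¹ : ZMod d) * (∑ i, p i * q i) + ∑ i, p i * x i) * (if y = x - q then 1 else 0)

/-- Weyl operator indexed by a phase space point. -/
noncomputable def weylV (d n : ℕ) (v : (Fin n → ZMod d) × (Fin n → ZMod d)) :
    Matrix (Fin n → ZMod d) (Fin n → ZMod d) ℂ :=
  weyl d n v.1 v.2

/-- Action of the Weyl operator on wave functions:
`(w(p,q)ψ)(y) = χ(-2⁻¹pq + py) ψ(y-q)`. -/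
noncomputable def weylAct (d n : ℕ) (p q : Fin n → ZMod d) (ψ : (Fin n → ZMod d) → ℂ) :
    (Fin n → ZMod d) → ℂ :=
  fun y => chi d (-(2⁻¹ : ZMod d) * (∑ i, p i * q i) + ∑ i, p i * y i) * ψ (y - q)

/-- Wigner function of a pure state `ψ`. -/
noncomputable def wignerPure (d n : ℕ) [NeZero d] (ψ : (Fin n → ZMod d) → ℂ)
    (p q : Fin n → ZMod d) : ℂ :=
  ((d : ℂ) ^ n)⁻¹ * ∑ ξ : Fin n → ZMod d, chi d (-(∑ i, ξ i * p i)) *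
    (starRingEnd ℂ) (ψ (q - (2⁻¹ : ZMod d) • ξ)) * ψ (q + (2⁻¹ : ZMod d) • ξ)

/-!
Fourier inversion of the Wigner function in the momentum variable gives
`conj ψ(q - x) ψ(q + x) = ∑ₚ χ(2x ⬝ p) W(p, q)` (this is where `d` odd enters: `2⁻¹ • 2x = x`).
When `W ≥ 0`, the triangle inequality bounds the modulus of the right side by
`∑ₚ W(p, q) = |ψ(q)|²`, the case `x = 0` of the same identity.
-/

lemma chi_eq_stdAddChar (d : ℕ) [NeZero d] : chi d = ⇑(ZMod.stdAddChar (N := d)) := by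
  ext t
  rw [chi, ZMod.stdAddChar_apply, ZMod.toCircle_apply]

lemma norm_chi (d : ℕ) [NeZero d] (t : ZMod d) : ‖chi d t‖ = 1 := by
  rw [chi_eq_stdAddChar, ZMod.stdAddChar_apply, Circle.norm_coe]

noncomputable def chiDot (d n : ℕ) [NeZero d] (ξ : Fin n → ZMod d) :
    AddChar (Fin n → ZMod d) ℂ :=
  ZMod.stdAddChar.compAddMonoidHom (dotProductBilin ℤ ℤ ξ).toAddMonoidHom

lemma chiDot_apply (d n : ℕ) [NeZero d] (ξ p : Fin n → ZMod d) :
    chiDot d n ξ p = chi d (ξ ⬝ᵥ p) := by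
  rw [chi_eq_stdAddChar]; rfl

lemma chiDot_eq_zero_iff (d n : ℕ) [NeZero d] (ξ : Fin n → ZMod d) :
    chiDot d n ξ = 0 ↔ ξ = 0 := by
  refine ⟨fun h => funext fun i => ZMod.injective_stdAddChar ?_, fun h => ?_⟩
  · have := DFunLike.congr_fun h (Pi.single i 1)
    rwa [chiDot_apply, dotProduct_single_one, AddChar.zero_apply, chi_eq_stdAddChar,
      ← (ZMod.stdAddChar (N := d)).map_zero_eq_one] at this
  · ext p
    rw [chiDot_apply, h, zero_dotProduct, AddChar.zero_apply, chi_eq_stdAddChar,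
      AddChar.map_zero_eq_one]

lemma sum_chi_dotProduct (d n : ℕ) [NeZero d] (ξ : Fin n → ZMod d) :
    ∑ p : Fin n → ZMod d, chi d (ξ ⬝ᵥ p) = if ξ = 0 then (d : ℂ) ^ n else 0 := by
  simp_rw [← chiDot_apply, AddChar.sum_eq_ite, chiDot_eq_zero_iff]
  simp [ZMod.card]

lemma fourier_inversion_chi (d n : ℕ) [NeZero d] (f : (Fin n → ZMod d) → ℂ)
    (η : Fin n → ZMod d) :
    ∑ p : Fin n → ZMod d, chi d (η ⬝ᵥ p) *
      (((d : ℂ) ^ n)⁻¹ * ∑ ξ : Fin n → ZMod d, chi d (-(ξ ⬝ᵥ p)) * f ξ) = f η := by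
  have hchi : ∀ ξ p : Fin n → ZMod d,
      chi d (η ⬝ᵥ p) * chi d (-(ξ ⬝ᵥ p)) = chi d ((η - ξ) ⬝ᵥ p) := by
    intro ξ p
    rw [sub_dotProduct, sub_eq_add_neg, chi_eq_stdAddChar, AddChar.map_add_eq_mul]
  have hd : (d : ℂ) ^ n ≠ 0 := pow_ne_zero _ (Nat.cast_ne_zero.mpr (NeZero.ne d))
  calc _ = ((d : ℂ) ^ n)⁻¹ * ∑ ξ : Fin n → ZMod d,
        (∑ p : Fin n → ZMod d, chi d ((η - ξ) ⬝ᵥ p)) * f ξ := by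
        simp only [mul_sum, sum_mul, ← hchi]
        rw [sum_comm]
        exact sum_congr rfl fun _ _ => sum_congr rfl fun _ _ => by ring
    _ = f η := by
        simp_rw [sum_chi_dotProduct, sub_eq_zero, ite_mul, zero_mul, sum_ite_eq, mem_univ,
          if_true, inv_mul_cancel_left₀ hd]

lemma sum_chi_mul_wignerPure (d n : ℕ) [NeZero d] (ψ : (Fin n → ZMod d) → ℂ)
    (ξ q : Fin n → ZMod d) :
    ∑ p : Fin n → ZMod d, chi d (ξ ⬝ᵥ p) * wignerPure d n ψ p q
      = starRingEnd ℂ (ψ (q - (2⁻¹ : ZMod d) • ξ)) * ψ (q + (2⁻¹ : ZMod d) • ξ) := by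
  simp_rw [wignerPure, mul_assoc]
  exact fourier_inversion_chi d n
    (fun ξ => starRingEnd ℂ (ψ (q - (2⁻¹ : ZMod d) • ξ)) * ψ (q + (2⁻¹ : ZMod d) • ξ)) ξ

lemma norm_sum_mul_le_norm_sum_of_nonneg {ι 𝕜 : Type*} [RCLike 𝕜] (s : Finset ι)
    {c w : ι → 𝕜} (hc : ∀ i ∈ s, ‖c i‖ ≤ 1) (hw : ∀ i ∈ s, 0 ≤ w i) :
    ‖∑ i ∈ s, c i * w i‖ ≤ ‖∑ i ∈ s, w i‖ :=
  calc ‖∑ i ∈ s, c i * w i‖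
      ≤ ∑ i ∈ s, ‖w i‖ := (norm_sum_le _ _).trans <| sum_le_sum fun i hi => by
        rw [norm_mul]; exact mul_le_of_le_one_left (norm_nonneg _) (hc i hi)
    _ = ‖∑ i ∈ s, w i‖ := by
        refine (RCLike.ofReal_inj (K := 𝕜)).mp ?_
        rw [RCLike.norm_of_nonneg' (sum_nonneg hw), RCLike.ofReal_sum]
        exact sum_congr rfl fun i hi => RCLike.norm_of_nonneg' (hw i hi)

lemma ZMod.inv_two_mul_two {d : ℕ} (hd : Odd d) : (2⁻¹ : ZMod d) * 2 = 1 := by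
  have h := (ZMod.isUnit_iff_coprime 2 d).mpr (Nat.coprime_two_left.mpr hd)
  exact ZMod.inv_mul_of_unit _ (by exact_mod_cast h)

theorem modulus_inequality_general (d n : ℕ) [NeZero d] (hd : Odd d)
    (ψ : (Fin n → ZMod d) → ℂ)
    (hpos : ∀ p q : Fin n → ZMod d, 0 ≤ wignerPure d n ψ p q)
    (q x : Fin n → ZMod d) :
    ‖ψ (q - x)‖ * ‖ψ (q + x)‖ ≤ ‖ψ q‖ ^ 2 := by
  have hx : (2⁻¹ : ZMod d) • (2 : ZMod d) • x = x := by
    rw [smul_smul, ZMod.inv_two_mul_two hd, one_smul]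
  calc ‖ψ (q - x)‖ * ‖ψ (q + x)‖
      = ‖∑ p, chi d (((2 : ZMod d) • x) ⬝ᵥ p) * wignerPure d n ψ p q‖ := by
        rw [sum_chi_mul_wignerPure, hx, norm_mul, Complex.norm_conj]
    _ ≤ ‖∑ p, wignerPure d n ψ p q‖ :=
        norm_sum_mul_le_norm_sum_of_nonneg _ (fun _ _ => (norm_chi d _).le) (fun p _ => hpos p q)
    _ = ‖ψ q‖ ^ 2 := by
        simpa [chi_eq_stdAddChar, sq] using congrArg norm (sum_chi_mul_wignerPure d n ψ 0 q)

/-- Modulus inequality for states with nonnegative Wigner function. -/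
theorem modulus_inequality (d n : ℕ) [NeZero d] (hd : Odd d)
    (ψ : (Fin n → ZMod d) → ℂ)
    (hψ : ∑ x : Fin n → ZMod d, Complex.normSq (ψ x) = 1)
    (hpos : ∀ p q : Fin n → ZMod d, 0 ≤ wignerPure d n ψ p q)
    (q x : Fin n → ZMod d) :
    ‖ψ (q - x)‖ * ‖ψ (q + x)‖ ≤ ‖ψ q‖ ^ 2 :=
  modulus_inequality_general d n hd ψ hpos q x
end

section
/- Let d be odd and suppose ψ is a unit vector on (ZMod d)^n whose Wigner function equals d^{-n} times the indicator function of a subgroup T of (ZMod d)^{2n} closed under scalar multiplication. Then T is isotropic: the symplectic form vanishes on T×T. -/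
open scoped BigOperators
open Finset Matrix
open scoped ComplexOrder

section Aux

set_option linter.unusedSectionVars false

variable {d : ℕ} [NeZero d]

lemma chi_natCast (m : ℕ) : chi d (m : ZMod d) = Complex.exp (2 * Real.pi * Complex.I * m / d) := by
  unfold chi
  have hd : (d:ℂ) ≠ 0 := by exact_mod_cast (NeZero.ne d)
  rw [ZMod.val_natCast]
  have hm0 : m = m % d + m / d * d := (Nat.mod_add_div' m d).symm
  have hm : (m : ℂ) = ((m % d : ℕ) : ℂ) + ((m / d : ℕ) : ℂ) * d := by
    nth_rewrite 1 [hm0]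
    push_cast
    ring
  rw [hm, mul_add, add_div, Complex.exp_add]
  have : 2 * ↑Real.pi * Complex.I * (((m / d : ℕ) : ℂ) * ↑d) / ↑d = ((m / d : ℕ) : ℂ) * (2 * ↑Real.pi * Complex.I) := by
    field_simp
  rw [this, Complex.exp_nat_mul_two_pi_mul_I, mul_one]

lemma chi_zero : chi d 0 = 1 := by
  unfold chi; simp

lemma chi_natCast_add (x y : ℕ) : chi d (((x + y : ℕ)) : ZMod d) = chi d (x : ZMod d) * chi d (y : ZMod d) := by
  rw [chi_natCast, chi_natCast, chi_natCast, ← Complex.exp_add]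
  congr 1
  push_cast
  ring

lemma chi_add (a b : ZMod d) : chi d (a + b) = chi d a * chi d b := by
  have h2 : ((a.val : ℕ) : ZMod d) = a := ZMod.natCast_rightInverse a
  have h3 : ((b.val : ℕ) : ZMod d) = b := ZMod.natCast_rightInverse b
  have h1 : ((a.val + b.val : ℕ) : ZMod d) = a + b := by push_cast [h2, h3]; ring
  rw [← h1, chi_natCast_add, h2, h3]

lemma chi_eq_one_iff (t : ZMod d) : chi d t = 1 ↔ t = 0 := by
  constructor
  · intro h
    unfold chi at h
    rw [Complex.exp_eq_one_iff] at h
    obtain ⟨k, hk⟩ := h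
    have hd : (d:ℂ) ≠ 0 := by exact_mod_cast (NeZero.ne d)
    have hπ : (2 * (Real.pi:ℂ) * Complex.I) ≠ 0 := by
      simp [Complex.I_ne_zero, Complex.ofReal_ne_zero, Real.pi_ne_zero]
    rw [div_eq_iff hd] at hk
    have hval : (t.val : ℂ) = k * d := by
      refine mul_left_cancel₀ hπ ?_
      linear_combination hk
    have h2 : (t.val : ℤ) = k * d := by exact_mod_cast hval
    have hdvd : (d:ℕ) ∣ t.val := by
      have : (d:ℤ) ∣ (t.val : ℤ) := ⟨k, by linarith [h2]⟩
      exact_mod_cast this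
    have hv0 : t.val = 0 := Nat.eq_zero_of_dvd_of_lt hdvd (ZMod.val_lt t)
    have := ZMod.natCast_rightInverse t
    rw [← this, hv0]; simp
  · intro h; rw [h, chi_zero]

lemma chi_ne_zero (t : ZMod d) : chi d t ≠ 0 := Complex.exp_ne_zero _

lemma chi_neg (t : ZMod d) : chi d (-t) = (chi d t)⁻¹ := by
  have := chi_add (d := d) t (-t)
  rw [add_neg_cancel, chi_zero] at this
  exact eq_inv_of_mul_eq_one_right this.symm

lemma chi_inj {s t : ZMod d} (h : chi d s = chi d t) : s = t := by
  have h1 : chi d (s - t) * chi d t = 1 * chi d t := by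
    rw [← chi_add, sub_add_cancel, h, one_mul]
  have h2 := mul_right_cancel₀ (chi_ne_zero t) h1
  have h3 := (chi_eq_one_iff (s - t)).mp h2
  rwa [sub_eq_zero] at h3
  
lemma chi_sum {ι : Type*} (s : Finset ι) (f : ι → ZMod d) :
    chi d (∑ i ∈ s, f i) = ∏ i ∈ s, chi d (f i) := by
  induction s using Finset.cons_induction with
  | empty => simp [chi_zero]
  | cons a s ha ih => rw [Finset.sum_cons, Finset.prod_cons, chi_add, ih]

lemma sum_chi_subgroup {V : Type*} [AddCommGroup V] [Fintype V] [DecidableEq V]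
    (S : Finset V) (hadd : ∀ a ∈ S, ∀ b ∈ S, a + b ∈ S) (hneg : ∀ a ∈ S, -a ∈ S)
    (f : V → ZMod d) (hf : ∀ a b, f (a + b) = f a + f b) :
    (∑ u ∈ S, chi d (f u)) = if (∀ u ∈ S, f u = 0) then (S.card : ℂ) else 0 := by
  by_cases h : ∀ u ∈ S, f u = 0
  · rw [if_pos h]
    rw [Finset.sum_congr rfl (fun u hu => by rw [h u hu, chi_zero])]
    simp
  · rw [if_neg h]
    push_neg at h
    obtain ⟨u0, hu0S, hu0⟩ := h
    have key : chi d (f u0) * (∑ u ∈ S, chi d (f u)) = ∑ u ∈ S, chi d (f u) := by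
      rw [Finset.mul_sum]
      refine Finset.sum_bij' (fun u _ => u0 + u) (fun u _ => -u0 + u) ?_ ?_ ?_ ?_ ?_
      · intro a ha; exact hadd u0 hu0S a ha
      · intro a ha; exact hadd _ (hneg u0 hu0S) a ha
      · intro a ha; exact neg_add_cancel_left u0 a
      · intro a ha; exact add_neg_cancel_left u0 a
      · intro a ha; rw [← chi_add, ← hf]
    have hne : chi d (f u0) ≠ 1 := fun hc => hu0 ((chi_eq_one_iff _).mp hc)
    by_contra hS
    nth_rewrite 2 [← one_mul (∑ u ∈ S, chi d (f u))] at key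
    exact hne (mul_right_cancel₀ hS key)


lemma normSq_chi (t : ZMod d) : Complex.normSq (chi d t) = 1 := by
  have h : chi d t = Complex.exp (((2 * Real.pi * t.val / d : ℝ) : ℂ) * Complex.I) := by
    unfold chi; push_cast; ring_nf
  rw [h, Complex.normSq_eq_norm_sq, Complex.norm_exp_ofReal_mul_I]
  norm_num

lemma orth_vec {n : ℕ} (c : Fin n → ZMod d) :
    (∑ p : Fin n → ZMod d, chi d (∑ i, c i * p i)) = if c = 0 then ((d:ℂ)^n) else 0 := by
  have hcard : (Finset.univ : Finset (Fin n → ZMod d)).card = d ^ n := by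
    simp [Finset.card_univ, ZMod.card]
  have hf : ∀ a b : Fin n → ZMod d, (∑ i, c i * (a + b) i) = (∑ i, c i * a i) + ∑ i, c i * b i := by
    intro a b
    rw [← Finset.sum_add_distrib]
    exact Finset.sum_congr rfl fun i _ => by simp [mul_add]
  rw [sum_chi_subgroup Finset.univ (by simp) (by simp) _ hf, hcard]
  congr 1
  · rw [eq_iff_iff]
    constructor
    · intro h
      funext j
      have := h (Pi.single j 1) (Finset.mem_univ _)
      simpa [Pi.single_apply, mul_ite, Finset.sum_ite_eq'] using this
    · intro h; simp [h]
  · push_cast; ring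

lemma orth_V {n : ℕ} (w : (Fin n → ZMod d) × (Fin n → ZMod d)) :
    (∑ v : (Fin n → ZMod d) × (Fin n → ZMod d), chi d (symp (ZMod d) n w v))
      = if w = 0 then ((d:ℂ)^n)^2 else 0 := by
  have hcard : (Finset.univ : Finset ((Fin n → ZMod d) × (Fin n → ZMod d))).card = (d ^ n)^2 := by
    simp [Finset.card_univ, ZMod.card]; ring
  have hf : ∀ a b, symp (ZMod d) n w (a + b) = symp (ZMod d) n w a + symp (ZMod d) n w b := by
    intro a b
    unfold symp
    have h1 : (∑ i, w.1 i * (a + b).2 i) = ∑ i, (w.1 i * a.2 i + w.1 i * b.2 i) :=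
      Finset.sum_congr rfl fun i _ => by simp [Prod.snd_add, mul_add]
    have h2 : (∑ i, w.2 i * (a + b).1 i) = ∑ i, (w.2 i * a.1 i + w.2 i * b.1 i) :=
      Finset.sum_congr rfl fun i _ => by simp [Prod.fst_add, mul_add]
    rw [h1, h2, Finset.sum_add_distrib, Finset.sum_add_distrib]
    ring
  rw [sum_chi_subgroup Finset.univ (by simp) (by simp) _ hf, hcard]
  congr 1
  · rw [eq_iff_iff]
    constructor
    · intro h
      have h1 : ∀ j, w.1 j = 0 := by
        intro j
        have := h (0, Pi.single j 1) (Finset.mem_univ _)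
        unfold symp at this
        simpa [Pi.single_apply, mul_ite, Finset.sum_ite_eq'] using this
      have h2 : ∀ j, w.2 j = 0 := by
        intro j
        have := h (Pi.single j 1, 0) (Finset.mem_univ _)
        unfold symp at this
        simpa [Pi.single_apply, mul_ite, Finset.sum_ite_eq'] using this
      exact Prod.ext (funext h1) (funext h2)
    · intro h
      intro v _
      unfold symp
      rw [h]
      simp
  · push_cast; ring

end Aux


section SympLemmas

variable {R : Type} [CommRing R] {n : ℕ}

lemma symp_add_left (a b w : (Fin n → R) × (Fin n → R)) :
    symp R n (a + b) w = symp R n a w + symp R n b w := by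
  unfold symp
  have h1 : (∑ i, (a + b).1 i * w.2 i) = ∑ i, (a.1 i * w.2 i + b.1 i * w.2 i) :=
    Finset.sum_congr rfl fun i _ => by simp [add_mul]
  have h2 : (∑ i, (a + b).2 i * w.1 i) = ∑ i, (a.2 i * w.1 i + b.2 i * w.1 i) :=
    Finset.sum_congr rfl fun i _ => by simp [add_mul]
  rw [h1, h2, Finset.sum_add_distrib, Finset.sum_add_distrib]
  ring

lemma symp_neg_left (a w : (Fin n → R) × (Fin n → R)) :
    symp R n (-a) w = -symp R n a w := by
  unfold symp
  have h1 : (∑ i, (-a).1 i * w.2 i) = ∑ i, -(a.1 i * w.2 i) :=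
    Finset.sum_congr rfl fun i _ => by simp
  have h2 : (∑ i, (-a).2 i * w.1 i) = ∑ i, -(a.2 i * w.1 i) :=
    Finset.sum_congr rfl fun i _ => by simp
  rw [h1, h2, Finset.sum_neg_distrib, Finset.sum_neg_distrib]
  ring

lemma symp_sub_left (a b w : (Fin n → R) × (Fin n → R)) :
    symp R n (a - b) w = symp R n a w - symp R n b w := by
  rw [sub_eq_add_neg, symp_add_left, symp_neg_left]
  ring

lemma symp_zero_right (a : (Fin n → R) × (Fin n → R)) : symp R n a 0 = 0 := by
  unfold symp
  simp

end SympLemmas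

lemma wigner_fourier (d n : ℕ) [NeZero d] (hd : Odd d) (ψ : (Fin n → ZMod d) → ℂ)
    (v : (Fin n → ZMod d) × (Fin n → ZMod d)) :
    (∑ u : (Fin n → ZMod d) × (Fin n → ZMod d),
        wignerPure d n ψ u.1 u.2 * chi d (-(symp (ZMod d) n u v)))
      = ∑ y, (starRingEnd ℂ) (ψ y) * weylAct d n v.1 v.2 ψ y := by
  have hd0 : ((d:ℂ))^n ≠ 0 := pow_ne_zero n (by exact_mod_cast NeZero.ne d)
  have h2u : IsUnit (2 : ZMod d) := by
    rw [show ((2:ZMod d)) = ((2:ℕ):ZMod d) by norm_cast, ZMod.isUnit_iff_coprime]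
    refine (Nat.Prime.coprime_iff_not_dvd Nat.prime_two).mpr ?_
    have := Nat.odd_iff.mp hd
    omega
  have hh : (2⁻¹ : ZMod d) + 2⁻¹ = 1 := by
    rw [← two_mul]
    exact ZMod.mul_inv_of_unit 2 h2u
  set h := (2⁻¹ : ZMod d) with hhdef
  set p' := v.1 with hp'
  set q' := v.2 with hq'
  have key : (∑ u : (Fin n → ZMod d) × (Fin n → ZMod d),
        wignerPure d n ψ u.1 u.2 * chi d (-(symp (ZMod d) n u v)))
      = ∑ q : Fin n → ZMod d, chi d (∑ i, q i * p' i) *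
          ((starRingEnd ℂ) (ψ (q + h • q')) * ψ (q - h • q')) := by
    rw [Fintype.sum_prod_type]
    have step1 : ∀ p q : Fin n → ZMod d,
        wignerPure d n ψ p q * chi d (-(symp (ZMod d) n (p, q) v))
        = ((d:ℂ)^n)⁻¹ * ∑ ξ : Fin n → ZMod d,
            (chi d (∑ i, q i * p' i) * ((starRingEnd ℂ) (ψ (q - h • ξ)) * ψ (q + h • ξ)))
              * chi d (∑ i, (-ξ i - q' i) * p i) := by
      intro p q
      unfold wignerPure
      rw [mul_assoc, Finset.sum_mul]
      congr 1
      refine Finset.sum_congr rfl fun ξ _ => ?_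
      have e1 : (∑ i, (-ξ i - q' i) * p i) = -(∑ i, ξ i * p i) - ∑ i, p i * q' i := by
        rw [← Finset.sum_neg_distrib, ← Finset.sum_sub_distrib]
        exact Finset.sum_congr rfl fun i _ => by ring
      have e2 : -(∑ i, ξ i * p i) + (-(symp (ZMod d) n (p, q) v))
          = (∑ i, q i * p' i) + ∑ i, (-ξ i - q' i) * p i := by
        unfold symp
        rw [e1]
        ring
      calc chi d (-(∑ i, ξ i * p i)) * (starRingEnd ℂ) (ψ (q - h • ξ)) * ψ (q + h • ξ)
            * chi d (-(symp (ZMod d) n (p, q) v))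
          = ((starRingEnd ℂ) (ψ (q - h • ξ)) * ψ (q + h • ξ))
              * chi d (-(∑ i, ξ i * p i) + (-(symp (ZMod d) n (p, q) v))) := by
            rw [chi_add]; ring
        _ = _ := by rw [e2, chi_add]; ring
    rw [Finset.sum_congr rfl fun p _ => Finset.sum_congr rfl fun q _ => step1 p q]
    simp only [← Finset.mul_sum]
    rw [Finset.sum_comm]
    have step2 : ∀ q : Fin n → ZMod d,
        (∑ p : Fin n → ZMod d, ∑ ξ : Fin n → ZMod d,
            (chi d (∑ i, q i * p' i) * ((starRingEnd ℂ) (ψ (q - h • ξ)) * ψ (q + h • ξ)))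
              * chi d (∑ i, (-ξ i - q' i) * p i))
        = (d:ℂ)^n * (chi d (∑ i, q i * p' i) *
            ((starRingEnd ℂ) (ψ (q + h • q')) * ψ (q - h • q'))) := by
      intro q
      rw [Finset.sum_comm]
      have inner : ∀ ξ : Fin n → ZMod d,
          (∑ p : Fin n → ZMod d,
            (chi d (∑ i, q i * p' i) * ((starRingEnd ℂ) (ψ (q - h • ξ)) * ψ (q + h • ξ)))
              * chi d (∑ i, (-ξ i - q' i) * p i))
          = if ξ = -q' then
              (chi d (∑ i, q i * p' i) * ((starRingEnd ℂ) (ψ (q - h • ξ)) * ψ (q + h • ξ)))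
                * (d:ℂ)^n
            else 0 := by
        intro ξ
        rw [← Finset.mul_sum, orth_vec (fun i => -ξ i - q' i)]
        have hiff : ((fun i => -ξ i - q' i) = 0) ↔ (ξ = -q') := by
          constructor
          · intro hc
            funext j
            have := congrFun hc j
            simp only [Pi.zero_apply] at this
            have : ξ j = -q' j := by linear_combination -this
            simpa using this
          · intro hc
            funext j
            rw [congrFun hc j]
            simp
        rw [if_congr hiff rfl rfl, mul_ite, mul_zero]
      rw [Finset.sum_congr rfl fun ξ _ => inner ξ, Finset.sum_ite_eq' Finset.univ (-q')]
      rw [if_pos (Finset.mem_univ _)]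
      have e3 : q - h • (-q') = q + h • q' := by
        rw [smul_neg, sub_neg_eq_add]
      have e4 : q + h • (-q') = q - h • q' := by
        rw [smul_neg, ← sub_eq_add_neg]
      rw [e3, e4]
      ring
    rw [Finset.sum_congr rfl fun q _ => step2 q, ← Finset.mul_sum, ← mul_assoc,
      inv_mul_cancel₀ hd0, one_mul]
  rw [key]
  refine (Fintype.sum_equiv (Equiv.subRight (h • q')) _ _ fun y => ?_).symm
  show (starRingEnd ℂ) (ψ y) * weylAct d n p' q' ψ y
      = chi d (∑ i, (y - h • q') i * p' i) *
          ((starRingEnd ℂ) (ψ (y - h • q' + h • q')) * ψ (y - h • q' - h • q'))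
  have e5 : y - h • q' + h • q' = y := by abel
  have e6 : y - h • q' - h • q' = y - q' := by
    rw [sub_sub, ← add_smul, hh, one_smul]
  have e7 : (∑ i, (y - h • q') i * p' i) = -h * (∑ i, p' i * q' i) + ∑ i, p' i * y i := by
    have : (∑ i, (y - h • q') i * p' i) = (∑ i, p' i * y i) - h * ∑ i, p' i * q' i := by
      rw [Finset.mul_sum, ← Finset.sum_sub_distrib]
      refine Finset.sum_congr rfl fun i _ => ?_
      simp only [Pi.sub_apply, Pi.smul_apply, smul_eq_mul]
      ring
    rw [this]
    ring
  rw [e5, e6, e7]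
  unfold weylAct
  rw [← hhdef]
  ring

/-- If the Wigner function of a pure state is `d^{-n}` times the indicator
function of a submodule `T` of phase space, then `T` is isotropic. -/
theorem indicator_support_isotropic (d n : ℕ) [NeZero d] (hd : Odd d)
    (ψ : (Fin n → ZMod d) → ℂ)
    (hψ : ∑ x : Fin n → ZMod d, Complex.normSq (ψ x) = 1)
    (T : Submodule (ZMod d) ((Fin n → ZMod d) × (Fin n → ZMod d)))
    (hW : ∀ p q : Fin n → ZMod d,
      wignerPure d n ψ p q = if (p, q) ∈ T then ((d : ℂ) ^ n)⁻¹ else 0) :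
    ∀ a ∈ T, ∀ b ∈ T, symp (ZMod d) n a b = 0 := by
  classical
  have hdC : ((d:ℂ))^n ≠ 0 := pow_ne_zero n (by exact_mod_cast NeZero.ne d)
  set c := ((d:ℂ)^n)⁻¹ with hc
  set A : ((Fin n → ZMod d) × (Fin n → ZMod d)) → ℂ :=
    fun v => ∑ u : (Fin n → ZMod d) × (Fin n → ZMod d),
      wignerPure d n ψ u.1 u.2 * chi d (-(symp (ZMod d) n u v)) with hA
  set Tf : Finset ((Fin n → ZMod d) × (Fin n → ZMod d)) :=
    Finset.univ.filter (fun u => u ∈ T) with hTf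
  set T'f : Finset ((Fin n → ZMod d) × (Fin n → ZMod d)) :=
    Finset.univ.filter (fun v => ∀ u ∈ T, symp (ZMod d) n u v = 0) with hT'f
  have hW' : ∀ u : (Fin n → ZMod d) × (Fin n → ZMod d),
      wignerPure d n ψ u.1 u.2 = if u ∈ T then c else 0 := by
    intro u
    rw [hW u.1 u.2]
  -- A as an indicator sum over T
  have hA_ind : ∀ v, A v = if v ∈ T'f then c * Tf.card else 0 := by
    intro v
    rw [hA]
    simp only
    have e1 : ∀ u : (Fin n → ZMod d) × (Fin n → ZMod d),
        wignerPure d n ψ u.1 u.2 * chi d (-(symp (ZMod d) n u v))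
        = if u ∈ Tf then c * chi d (-(symp (ZMod d) n u v)) else 0 := by
      intro u
      rw [hW' u, hTf]
      simp [Finset.mem_filter]
    rw [Finset.sum_congr rfl fun u _ => e1 u, Finset.sum_ite_mem, Finset.univ_inter,
      ← Finset.mul_sum]
    have hadd : ∀ a ∈ Tf, ∀ b ∈ Tf, a + b ∈ Tf := by
      intro a ha b hb
      simp only [hTf, Finset.mem_filter, Finset.mem_univ, true_and] at *
      exact T.add_mem ha hb
    have hneg : ∀ a ∈ Tf, -a ∈ Tf := by
      intro a ha
      simp only [hTf, Finset.mem_filter, Finset.mem_univ, true_and] at *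
      exact T.neg_mem ha
    have hf : ∀ a b, -(symp (ZMod d) n (a + b) v) = -(symp (ZMod d) n a v) + -(symp (ZMod d) n b v) := by
      intro a b
      rw [symp_add_left]
      ring
    rw [sum_chi_subgroup Tf hadd hneg _ hf]
    have hcond : (∀ u ∈ Tf, -(symp (ZMod d) n u v) = 0) ↔ v ∈ T'f := by
      simp only [hTf, hT'f, Finset.mem_filter, Finset.mem_univ, true_and, neg_eq_zero]
    rw [if_congr hcond rfl rfl, mul_ite, mul_zero]
  have hA_weyl : ∀ v, A v = ∑ y, (starRingEnd ℂ) (ψ y) * weylAct d n v.1 v.2 ψ y :=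
    fun v => wigner_fourier d n hd ψ v
  -- A 0 = 1
  have hpsi_sum : (∑ y, (starRingEnd ℂ) (ψ y) * ψ y) = 1 := by
    have : ∀ y, (starRingEnd ℂ) (ψ y) * ψ y = ((Complex.normSq (ψ y) : ℝ) : ℂ) := by
      intro y
      rw [mul_comm, Complex.mul_conj]
    rw [Finset.sum_congr rfl fun y _ => this y, ← Complex.ofReal_sum, hψ, Complex.ofReal_one]
  have hA0 : A 0 = 1 := by
    rw [hA_weyl 0]
    have : ∀ y, weylAct d n (0 : (Fin n → ZMod d) × (Fin n → ZMod d)).1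
        (0 : (Fin n → ZMod d) × (Fin n → ZMod d)).2 ψ y = ψ y := by
      intro y
      unfold weylAct
      simp [chi_zero]
    rw [Finset.sum_congr rfl fun y _ => by rw [this y]]
    exact hpsi_sum
  have h0T' : (0 : (Fin n → ZMod d) × (Fin n → ZMod d)) ∈ T'f := by
    simp only [hT'f, Finset.mem_filter, Finset.mem_univ, true_and]
    intro u _
    exact symp_zero_right u
  have hTcard : (Tf.card : ℂ) = (d:ℂ)^n := by
    have := hA_ind 0
    rw [hA0, if_pos h0T', hc] at this
    field_simp at this
    exact this.symm
  have hA_one : ∀ v ∈ T'f, A v = 1 := by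
    intro v hv
    rw [hA_ind v, if_pos hv, hTcard, hc, inv_mul_cancel₀ hdC]
  -- eigenvector property
  have heigen : ∀ v ∈ T'f, weylAct d n v.1 v.2 ψ = ψ := by
    intro v hv
    set U := weylAct d n v.1 v.2 ψ with hU
    have h1 : (∑ y, (starRingEnd ℂ) (ψ y) * U y) = 1 := by
      rw [← hA_weyl v]
      exact hA_one v hv
    have hUy : ∀ y, U y = chi d (-(2⁻¹ : ZMod d) * (∑ i, v.1 i * v.2 i) + ∑ i, v.1 i * y i)
        * ψ (y - v.2) := fun y => rfl
    have hUnorm : (∑ y, Complex.normSq (U y)) = 1 := by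
      have e : ∀ y, Complex.normSq (U y) = Complex.normSq (ψ (y - v.2)) := by
        intro y
        rw [hUy y, Complex.normSq_mul, normSq_chi, one_mul]
      rw [Finset.sum_congr rfl fun y _ => e y]
      have etr : (∑ y, Complex.normSq (ψ (y - v.2))) = ∑ y, Complex.normSq (ψ y) :=
        Fintype.sum_equiv (Equiv.subRight v.2) _ _ (fun y => rfl)
      rw [etr]
      exact hψ
    have hsum0 : (∑ y, Complex.normSq (ψ y - U y)) = 0 := by
      have e : ∀ y, Complex.normSq (ψ y - U y)
          = Complex.normSq (ψ y) + Complex.normSq (U y) - 2 * (ψ y * (starRingEnd ℂ) (U y)).re :=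
        fun y => Complex.normSq_sub _ _
      rw [Finset.sum_congr rfl fun y _ => e y, Finset.sum_sub_distrib, Finset.sum_add_distrib,
        hψ, hUnorm]
      have e2 : (∑ y, 2 * (ψ y * (starRingEnd ℂ) (U y)).re)
          = 2 * (∑ y, ψ y * (starRingEnd ℂ) (U y)).re := by
        rw [Complex.re_sum, Finset.mul_sum]
      have e3 : (∑ y, ψ y * (starRingEnd ℂ) (U y)) = 1 := by
        have : ∀ y, ψ y * (starRingEnd ℂ) (U y) = (starRingEnd ℂ) ((starRingEnd ℂ) (ψ y) * U y) := by
          intro y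
          rw [_root_.map_mul, Complex.conj_conj]
        rw [Finset.sum_congr rfl fun y _ => this y, ← _root_.map_sum, h1, _root_.map_one]
      rw [e2, e3]
      norm_num
    funext y
    have hz := (Finset.sum_eq_zero_iff_of_nonneg
      (fun y _ => Complex.normSq_nonneg (ψ y - U y))).mp hsum0 y (Finset.mem_univ y)
    have := Complex.normSq_eq_zero.mp hz
    have := sub_eq_zero.mp this
    exact this.symm
  -- T' is isotropic
  obtain ⟨y0, hy0⟩ : ∃ y0, ψ y0 ≠ 0 := by
    by_contra hcon
    push_neg at hcon
    have hz : (∑ x : Fin n → ZMod d, Complex.normSq (ψ x)) = 0 :=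
      Finset.sum_eq_zero fun x _ => by rw [hcon x, Complex.normSq_zero]
    have := hz.symm.trans hψ
    norm_num at this
  have hiso : ∀ v ∈ T'f, ∀ v' ∈ T'f, symp (ZMod d) n v v' = 0 := by
    intro v hv v' hv'
    have Hv := heigen v hv
    have Hv' := heigen v' hv'
    set p := v.1
    set q := v.2
    set p'' := v'.1
    set q'' := v'.2
    set y : Fin n → ZMod d := y0 + q'' + q with hy
    have hyq : y - q - q'' = y0 := by rw [hy]; abel
    have hyq' : y - q'' - q = y0 := by rw [hy]; abel
    have e1 := congrFun Hv y
    have e2 := congrFun Hv' (y - q)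
    have e3 := congrFun Hv' y
    have e4 := congrFun Hv (y - q'')
    unfold weylAct at e1 e2 e3 e4
    rw [hyq] at e2
    rw [hyq'] at e4
    set a1 := -(2⁻¹ : ZMod d) * (∑ i, p i * q i) + ∑ i, p i * y i with ha1
    set a2 := -(2⁻¹ : ZMod d) * (∑ i, p'' i * q'' i) + ∑ i, p'' i * (y - q) i with ha2
    set b1 := -(2⁻¹ : ZMod d) * (∑ i, p'' i * q'' i) + ∑ i, p'' i * y i with hb1
    set b2 := -(2⁻¹ : ZMod d) * (∑ i, p i * q i) + ∑ i, p i * (y - q'') i with hb2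
    have hchain1 : chi d a1 * (chi d a2 * ψ y0) = ψ y := by rw [e2, e1]
    have hchain2 : chi d b1 * (chi d b2 * ψ y0) = ψ y := by rw [e4, e3]
    have hmul : chi d (a1 + a2) * ψ y0 = chi d (b1 + b2) * ψ y0 := by
      calc chi d (a1 + a2) * ψ y0 = chi d a1 * (chi d a2 * ψ y0) := by
            rw [chi_add (d := d) a1 a2]; ring
        _ = ψ y := hchain1
        _ = chi d b1 * (chi d b2 * ψ y0) := hchain2.symm
        _ = chi d (b1 + b2) * ψ y0 := by rw [chi_add (d := d) b1 b2]; ring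
    have hargs : a1 + a2 = b1 + b2 := chi_inj (mul_right_cancel₀ hy0 hmul)
    have hs1 : (∑ i, p'' i * (y - q) i) = (∑ i, p'' i * y i) - ∑ i, q i * p'' i := by
      rw [← Finset.sum_sub_distrib]
      refine Finset.sum_congr rfl fun i _ => ?_
      simp only [Pi.sub_apply]
      ring
    have hs2 : (∑ i, p i * (y - q'') i) = (∑ i, p i * y i) - ∑ i, p i * q'' i := by
      rw [← Finset.sum_sub_distrib]
      refine Finset.sum_congr rfl fun i _ => ?_
      simp only [Pi.sub_apply]
      ring
    rw [ha1, ha2, hb1, hb2, hs1, hs2] at hargs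
    unfold symp
    linear_combination hargs
  -- the double Fourier identity: for u ∈ T'f, W u * (d^n)^2 = T'f.card
  have hX : ∀ u ∈ T'f, wignerPure d n ψ u.1 u.2 * ((d:ℂ)^n)^2 = (T'f.card : ℂ) := by
    intro u hu
    have hXa : (∑ v : (Fin n → ZMod d) × (Fin n → ZMod d), A v * chi d (symp (ZMod d) n u v))
        = (T'f.card : ℂ) := by
      have e1 : ∀ v, A v * chi d (symp (ZMod d) n u v)
          = if v ∈ T'f then chi d (symp (ZMod d) n u v) else 0 := by
        intro v
        by_cases hv : v ∈ T'f
        · rw [if_pos hv, hA_one v hv, one_mul]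
        · rw [if_neg hv, hA_ind v, if_neg hv, zero_mul]
      rw [Finset.sum_congr rfl fun v _ => e1 v, Finset.sum_ite_mem, Finset.univ_inter]
      have e2 : ∀ v ∈ T'f, chi d (symp (ZMod d) n u v) = 1 := by
        intro v hv
        rw [hiso u hu v hv, chi_zero]
      rw [Finset.sum_congr rfl e2]
      simp
    have hXb : (∑ v : (Fin n → ZMod d) × (Fin n → ZMod d), A v * chi d (symp (ZMod d) n u v))
        = wignerPure d n ψ u.1 u.2 * ((d:ℂ)^n)^2 := by
      rw [hA]
      simp only [Finset.sum_mul]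
      rw [Finset.sum_comm]
      have e3 : ∀ u' : (Fin n → ZMod d) × (Fin n → ZMod d),
          (∑ v : (Fin n → ZMod d) × (Fin n → ZMod d),
            wignerPure d n ψ u'.1 u'.2 * chi d (-(symp (ZMod d) n u' v)) * chi d (symp (ZMod d) n u v))
          = if u' = u then wignerPure d n ψ u'.1 u'.2 * ((d:ℂ)^n)^2 else 0 := by
        intro u'
        have e4 : ∀ v, wignerPure d n ψ u'.1 u'.2 * chi d (-(symp (ZMod d) n u' v)) * chi d (symp (ZMod d) n u v)
            = wignerPure d n ψ u'.1 u'.2 * chi d (symp (ZMod d) n (u - u') v) := by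
          intro v
          rw [mul_assoc, ← chi_add]
          congr 2
          rw [symp_sub_left]
          ring
        rw [Finset.sum_congr rfl fun v _ => e4 v, ← Finset.mul_sum, orth_V]
        have : (u - u' = 0) ↔ (u' = u) := by
          rw [sub_eq_zero, eq_comm]
        rw [if_congr this rfl rfl, mul_ite, mul_zero]
      rw [Finset.sum_congr rfl fun u' _ => e3 u', Finset.sum_ite_eq' Finset.univ u]
      rw [if_pos (Finset.mem_univ u)]
    rw [← hXb, hXa]
  -- conclude T'f ⊆ Tf
  have hsubset : T'f ⊆ Tf := by
    intro u hu
    have := hX u hu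
    by_contra hmem
    have huT : u ∉ T := by
      simpa only [hTf, Finset.mem_filter, Finset.mem_univ, true_and] using hmem
    rw [hW' u, if_neg huT, zero_mul] at this
    have hcard0 : T'f.card = 0 := by exact_mod_cast this.symm
    rw [Finset.card_eq_zero] at hcard0
    rw [hcard0] at h0T'
    exact absurd h0T' (Finset.notMem_empty _)
  have hcards : T'f.card = Tf.card := by
    have := hX 0 h0T'
    rw [hW' 0, if_pos T.zero_mem, hc] at this
    have h2 : ((d:ℂ)^n)⁻¹ * ((d:ℂ)^n)^2 = (d:ℂ)^n := by
      field_simp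
    rw [h2] at this
    have : (T'f.card : ℂ) = (Tf.card : ℂ) := by rw [← this, hTcard]
    exact_mod_cast this
  have heq : T'f = Tf :=
    Finset.eq_of_subset_of_card_le hsubset (le_of_eq hcards.symm)
  intro a ha b hb
  have hbT : b ∈ Tf := by
    simp only [hTf, Finset.mem_filter, Finset.mem_univ, true_and]
    exact hb
  rw [← heq] at hbT
  simp only [hT'f, Finset.mem_filter, Finset.mem_univ, true_and] at hbT
  exact hbT a ha
end
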